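/- For every repetitive nondeterministic finite automaton with translucent words (RNFAwtw) A, there exists an RNFAwtw B such that L(B) = L(A) and B only accepts once it has read and deleted its input completely; that is, in every accepting computation of B, the accepting step is applied to a configuration (q, λ) whose remaining tape content is the empty word. -/

import Mathlib

/-! Repetitive (non)deterministic finite automata with translucent words. -/

/-- Behavior of the automaton at the end-of-tape marker: halt accepting,
halt rejecting, or (in the repetitive case) continue in one of a set of states. -/
inductive EndBehavior (Q : Type) : Type where
  | accept : EndBehavior Q
  | reject : EndBehavior Q
  | cont : Set Q → EndBehavior Q

/-- `InStar S w` means `w` belongs to the Kleene star `S*` of the set of words `S`. -/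
def InStar {α : Type} (S : Set (List α)) (w : List α) : Prop :=
  ∃ l : List (List α), (∀ u ∈ l, u ∈ S) ∧ l.flatten = w

/-- A (repetitive) nondeterministic finite automaton with translucent words,
with state set `Q` over the alphabet `α`.  `tl q` is the set `τ(q)` of
translucent words of the state `q`, `delta` is the transition function and
`endB q` is the behavior at the end-of-tape marker.  The fields `tl_fin`,
`code_ne`, `prefix_code` and `tl_head` express that each `τ(q)` is finite,
that `τ(q) ∪ Σ_q` is a prefix code (no empty word, and no member is a proper
prefix of another member), and that no word of `τ(q)` begins with a letter
readable in `q`. -/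
structure RNFAwtw (α : Type) (Q : Type) : Type where
  init : Set Q
  tl : Q → Set (List α)
  delta : Q → α → Set Q
  endB : Q → EndBehavior Q
  tl_fin : ∀ q, (tl q).Finite
  code_ne : ∀ q, [] ∉ tl q
  prefix_code : ∀ q,
    ∀ u ∈ tl q ∪ {w | ∃ a, (delta q a).Nonempty ∧ w = [a]},
    ∀ v ∈ tl q ∪ {w | ∃ a, (delta q a).Nonempty ∧ w = [a]},
      u <+: v → u = v
  tl_head : ∀ q, ∀ t ∈ tl q, ∀ a, (delta q a).Nonempty → ¬ [a] <+: t

/-- Configurations: a pair of a state and the remaining tape content, or one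
of the two halting configurations. -/
inductive Conf (α Q : Type) : Type where
  | state : Q → List α → Conf α Q
  | accept : Conf α Q
  | reject : Conf α Q

/-- The single-step computation relation of an RNFAwtw. -/
inductive RNFAwtw.Step {α Q : Type} (A : RNFAwtw α Q) :
    Conf α Q → Conf α Q → Prop where
  | read {q q' : Q} {a : α} {u v : List α} :
      InStar (A.tl q) u → q' ∈ A.delta q a →
      RNFAwtw.Step A (Conf.state q (u ++ a :: v)) (Conf.state q' (u ++ v))
  | stuck {q : Q} {a : α} {u v : List α} :
      InStar (A.tl q) u → A.delta q a = ∅ →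
      (∀ t ∈ A.tl q, ¬ t <+: (a :: v)) →
      RNFAwtw.Step A (Conf.state q (u ++ a :: v)) Conf.reject
  | haltAccept {q : Q} {w : List α} :
      InStar (A.tl q) w → A.endB q = EndBehavior.accept →
      RNFAwtw.Step A (Conf.state q w) Conf.accept
  | haltReject {q : Q} {w : List α} :
      InStar (A.tl q) w → A.endB q = EndBehavior.reject →
      RNFAwtw.Step A (Conf.state q w) Conf.reject
  | goOn {q q' : Q} {w : List α} {S : Set Q} :
      InStar (A.tl q) w → A.endB q = EndBehavior.cont S → q' ∈ S →
      RNFAwtw.Step A (Conf.state q w) (Conf.state q' w)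

/-- `A` accepts the word `w`. -/
def RNFAwtw.Accepts {α Q : Type} (A : RNFAwtw α Q) (w : List α) : Prop :=
  ∃ q0 ∈ A.init, Relation.ReflTransGen A.Step (Conf.state q0 w) Conf.accept

/-- The language accepted by `A`. -/
def RNFAwtw.lang {α Q : Type} (A : RNFAwtw α Q) : Set (List α) :=
  { w | A.Accepts w }

/-- `A` is deterministic: one initial state, at most one transition per
state/letter pair, and at the end-of-tape marker the continuation (if any)
is a single state. -/
def RNFAwtw.Deterministic {α Q : Type} (A : RNFAwtw α Q) : Prop :=
  (∃ q0, A.init = {q0}) ∧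
  (∀ q a, (A.delta q a).Subsingleton) ∧
  (∀ q S, A.endB q = EndBehavior.cont S → ∃ q', S = {q'})

/-- `A` is non-repetitive: at the end-of-tape marker it always halts. -/
def RNFAwtw.NonRepetitive {α Q : Type} (A : RNFAwtw α Q) : Prop :=
  ∀ q S, A.endB q ≠ EndBehavior.cont S

/-- `L` is accepted by some repetitive NFAwtw (with a finite state set). -/
def AcceptedByRNFAwtw {α : Type} (L : Set (List α)) : Prop :=
  ∃ (Q : Type) (_ : Finite Q) (A : RNFAwtw α Q), A.lang = L

/-- `L` is accepted by some repetitive DFAwtw. -/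
def AcceptedByRDFAwtw {α : Type} (L : Set (List α)) : Prop :=
  ∃ (Q : Type) (_ : Finite Q) (A : RNFAwtw α Q), A.Deterministic ∧ A.lang = L

/-- `L` is accepted by some (non-repetitive) NFAwtw. -/
def AcceptedByNFAwtw {α : Type} (L : Set (List α)) : Prop :=
  ∃ (Q : Type) (_ : Finite Q) (A : RNFAwtw α Q), A.NonRepetitive ∧ A.lang = L

/-- `L` is accepted by some (non-repetitive) DFAwtw. -/
def AcceptedByDFAwtw {α : Type} (L : Set (List α)) : Prop :=
  ∃ (Q : Type) (_ : Finite Q) (A : RNFAwtw α Q),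
    A.NonRepetitive ∧ A.Deterministic ∧ A.lang = L

/-- The two-letter alphabet `{a, b}`. -/
inductive Letter : Type where
  | a : Letter
  | b : Letter
deriving DecidableEq

instance : Fintype Letter :=
  ⟨{Letter.a, Letter.b}, fun x => by cases x <;> simp⟩


/-!
Add a sink state that deletes the remaining input letter by letter and accepts only on the
empty tape, and let every accepting halt of `A` become an end-of-tape move into the sink.
Since the sink always reaches `Accept`, projecting sink configurations to `Accept` turns runs
of the new automaton into runs of `A`; conversely, a run of `A` is simulated step by step, an
accepting halt being followed by the deletion run of the sink.
-/

theorem InStar.nil {α : Type} (S : Set (List α)) : InStar S [] := ⟨[], by simp, rfl⟩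

theorem InStar.eq_nil_of_empty {α : Type} {w : List α} (h : InStar (∅ : Set (List α)) w) :
    w = [] := by
  obtain ⟨_ | ⟨u, l⟩, hl, rfl⟩ := h
  · rfl
  · exact absurd (hl u (by simp)) (by simp)

namespace EndBehavior

variable {Q : Type}

/-- Acceptance is replaced by a move to the sink state `Sum.inr ()`. -/
def deferAccept : EndBehavior Q → EndBehavior (Q ⊕ Unit)
  | accept => cont {Sum.inr ()}
  | reject => reject
  | cont S => cont (Sum.inl '' S)

theorem deferAccept_ne_accept (e : EndBehavior Q) : e.deferAccept ≠ accept := by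
  cases e <;> simp [deferAccept]

theorem deferAccept_eq_reject_iff {e : EndBehavior Q} : e.deferAccept = reject ↔ e = reject := by
  cases e <;> simp [deferAccept]

theorem deferAccept_eq_cont_iff {e : EndBehavior Q} {S : Set (Q ⊕ Unit)} :
    e.deferAccept = cont S ↔
      (e = accept ∧ S = {Sum.inr ()}) ∨ ∃ S₀, e = cont S₀ ∧ S = Sum.inl '' S₀ := by
  cases e <;> simp [deferAccept, eq_comm]

end EndBehavior

namespace RNFAwtw

variable {α Q : Type} (A : RNFAwtw α Q)

def readAll : RNFAwtw α (Q ⊕ Unit) where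
  init := Sum.inl '' A.init
  tl := Sum.elim A.tl fun _ => ∅
  delta := Sum.elim (fun q a => Sum.inl '' A.delta q a) fun _ _ => {Sum.inr ()}
  endB := Sum.elim (fun q => (A.endB q).deferAccept) fun _ => EndBehavior.accept
  tl_fin := by
    rintro (q | _)
    exacts [A.tl_fin q, Set.finite_empty]
  code_ne := by
    rintro (q | _)
    exacts [A.code_ne q, Set.notMem_empty _]
  prefix_code := by
    rintro (q | _) u hu v hv huv
    · simp only [Sum.elim_inl, Set.image_nonempty] at hu hv
      exact A.prefix_code q u hu v hv huv
    · simp only [Sum.elim_inr, Set.empty_union, Set.mem_ofPred_eq] at hu hv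
      obtain ⟨a, -, rfl⟩ := hu
      obtain ⟨b, -, rfl⟩ := hv
      obtain ⟨_, ⟨⟩⟩ := huv
      rfl
  tl_head := by
    rintro (q | _) t ht a ha
    · exact A.tl_head q t ht a (Set.image_nonempty.mp ha)
    · exact absurd ht (Set.notMem_empty t)

theorem readAll_sink_reaches_accept (w : List α) :
    Relation.ReflTransGen A.readAll.Step (Conf.state (Sum.inr ()) w) Conf.accept := by
  induction w with
  | nil => exact .single (.haltAccept (InStar.nil _) rfl)
  | cons a v ih =>
    refine .head ?_ ih
    simpa using Step.read (A := A.readAll) (q := Sum.inr ()) (u := []) (v := v)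
      (InStar.nil _) (show Sum.inr () ∈ A.readAll.delta (Sum.inr ()) a from rfl)

/-- Sink configurations are sent to `Accept`, since the sink accepts every tape. -/
def projectConf : Conf α (Q ⊕ Unit) → Conf α Q
  | Conf.state (Sum.inl q) w => Conf.state q w
  | Conf.state (Sum.inr _) _ => Conf.accept
  | Conf.accept => Conf.accept
  | Conf.reject => Conf.reject

def embedConf : Conf α Q → Conf α (Q ⊕ Unit)
  | Conf.state q w => Conf.state (Sum.inl q) w
  | Conf.accept => Conf.accept
  | Conf.reject => Conf.reject

theorem readAll_step_project {c c' : Conf α (Q ⊕ Unit)} (h : A.readAll.Step c c') :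
    Relation.ReflTransGen A.Step (projectConf c) (projectConf c') := by
  cases h with
  | @read q q' _ _ _ hu hq =>
    cases q with
    | inl q =>
      obtain ⟨p, hp, rfl⟩ := hq
      exact .single (.read hu hp)
    | inr _ =>
      obtain rfl : q' = Sum.inr () := hq
      exact .refl
  | @stuck q _ _ _ hu hd ht =>
    cases q with
    | inl q => exact .single (.stuck hu (Set.image_eq_empty.mp hd) ht)
    | inr _ => exact absurd hd (Set.singleton_ne_empty _)
  | @haltAccept q _ _ he =>
    cases q with
    | inl q => exact absurd he (EndBehavior.deferAccept_ne_accept _)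
    | inr _ => exact .refl
  | @haltReject q _ hw he =>
    cases q with
    | inl q => exact .single (.haltReject hw (EndBehavior.deferAccept_eq_reject_iff.mp he))
    | inr _ => cases he
  | @goOn q q' _ _ hw he hq' =>
    cases q with
    | inr _ => cases he
    | inl q =>
      rcases EndBehavior.deferAccept_eq_cont_iff.mp he with ⟨hA, rfl⟩ | ⟨S₀, hA, rfl⟩
      · obtain rfl : q' = Sum.inr () := hq'
        exact .single (.haltAccept hw hA)
      · obtain ⟨p, hp, rfl⟩ := hq'
        exact .single (.goOn hw hA hp)

theorem step_embed_readAll {c c' : Conf α Q} (h : A.Step c c') :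
    Relation.ReflTransGen A.readAll.Step (embedConf c) (embedConf c') := by
  cases h with
  | read hu hq => exact .single (.read (q' := Sum.inl _) hu ⟨_, hq, rfl⟩)
  | stuck hu hd ht =>
    exact .single (.stuck hu (by simp [readAll, hd]) ht)
  | @haltAccept _ w hw he =>
    refine .head ?_ (A.readAll_sink_reaches_accept w)
    exact .goOn (S := {Sum.inr ()}) hw (by simp [readAll, he, EndBehavior.deferAccept]) rfl
  | haltReject hw he =>
    exact .single (.haltReject hw (by simp [readAll, he, EndBehavior.deferAccept]))
  | @goOn _ q' _ S hw he hq' =>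
    exact .single (.goOn (S := Sum.inl '' S) hw (by simp [readAll, he, EndBehavior.deferAccept])
      ⟨q', hq', rfl⟩)

theorem lang_readAll : A.readAll.lang = A.lang := by
  ext w
  constructor
  · rintro ⟨_, ⟨q₀, hq₀, rfl⟩, hrun⟩
    exact ⟨q₀, hq₀, Relation.ReflTransGen.lift' projectConf
      (fun _ _ => A.readAll_step_project) _ _ hrun⟩
  · rintro ⟨q₀, hq₀, hrun⟩
    exact ⟨Sum.inl q₀, ⟨q₀, hq₀, rfl⟩, Relation.ReflTransGen.lift' embedConf
      (fun _ _ => A.step_embed_readAll) _ _ hrun⟩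

theorem eq_nil_of_readAll_step_accept {q : Q ⊕ Unit} {w : List α}
    (h : A.readAll.Step (Conf.state q w) Conf.accept) : w = [] := by
  cases h with
  | haltAccept hw he =>
    cases q with
    | inl q => exact absurd he (EndBehavior.deferAccept_ne_accept _)
    | inr _ => exact InStar.eq_nil_of_empty hw

end RNFAwtw

theorem readAll_RNFAwtw_general {α Q : Type} [Finite Q] (A : RNFAwtw α Q) :
    ∃ (Q' : Type) (_ : Finite Q') (B : RNFAwtw α Q'),
      B.lang = A.lang ∧
      ∀ (q : Q') (w : List α), B.Step (Conf.state q w) Conf.accept → w = [] :=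
  ⟨Q ⊕ Unit, inferInstance, A.readAll, A.lang_readAll,
    fun _ _ => A.eq_nil_of_readAll_step_accept⟩

/-- For every RNFAwtw `A` there is an RNFAwtw `B` with the same language that
only accepts once it has read and deleted its input completely: every
accepting step of `B` is applied to a configuration whose remaining tape
content is the empty word. -/
theorem readAll_RNFAwtw {α Q : Type} [Finite α] [Finite Q] (A : RNFAwtw α Q) :
    ∃ (Q' : Type) (_ : Finite Q') (B : RNFAwtw α Q'),
      B.lang = A.lang ∧
      ∀ (q : Q') (w : List α), B.Step (Conf.state q w) Conf.accept → w = [] :=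
  readAll_RNFAwtw_general A
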